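/- arXiv:2603.09764 — 2 statements merged into one kernel-verified Lean document; each statement's English description precedes it below -/
import Mathlib

section
/- Let B be a quaternion algebra over a field K of characteristic ≠ 2, u ∈ B nonzero isotropic, and γ = (γ₁, γ₂) ∈ Bˣ × Bˣ acting by γ ⋅ u = γ₁·u·γ₂⁻¹. Then ker(r_{γ⋅u}) ∩ B₀ = γ₁·(ker(r_u) ∩ B₀)·γ₁⁻¹ and ker(ℓ_{γ⋅u}) ∩ B₀ = γ₂·(ker(ℓ_u) ∩ B₀)·γ₂⁻¹. -/
open Quaternion

/-- The reduced trace of a quaternion: `Trd x = x + star x = 2 * x.re`. -/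
def Trd {K : Type*} [Field K] {a b : K} (x : ℍ[K, a, b]) : K := 2 * x.re

/-- The reduced norm of a quaternion: the scalar `x * star x`. -/
def Nrd {K : Type*} [Field K] {a b : K} (x : ℍ[K, a, b]) : K := (x * star x).re

/-- The subspace `B₀` of pure quaternions (reduced trace zero elements). -/
def pureQuaternions (K : Type*) [Field K] (a b : K) : Submodule K ℍ[K, a, b] where
  carrier := {x | Trd x = 0}
  add_mem' := by
    intro x y hx hy
    simp only [Set.mem_setOf_eq, Trd, show (x + y).re = x.re + y.re from rfl] at *
    linear_combination hx + hy
  zero_mem' := by simp [Trd]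
  smul_mem' := by
    intro c x hx
    simp only [Set.mem_setOf_eq, Trd, show (c • x).re = c • x.re from rfl, smul_eq_mul] at *
    rw [mul_left_comm, hx, mul_zero]

/-- Conjugation `x ↦ γ · x · γ⁻¹` by a unit, as a `K`-linear map. -/
noncomputable def conjMap {K : Type*} [Field K] {a b : K} (γ : (ℍ[K, a, b])ˣ) :
    ℍ[K, a, b] →ₗ[K] ℍ[K, a, b] :=
  (LinearMap.mulRight K ((γ⁻¹ : (ℍ[K, a, b])ˣ) : ℍ[K, a, b])).comp
    (LinearMap.mulLeft K (γ : ℍ[K, a, b]))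

lemma mem_pure {K : Type*} [Field K] {a b : K} {x : ℍ[K, a, b]} :
    x ∈ pureQuaternions K a b ↔ Trd x = 0 := Iff.rfl

lemma re_mul_comm {K : Type*} [Field K] {a b : K} (x y : ℍ[K, a, b]) :
    (x * y).re = (y * x).re := by
  simp only [QuaternionAlgebra.re_mul]; ring

lemma conjMap_apply {K : Type*} [Field K] {a b : K} (γ : (ℍ[K, a, b])ˣ) (x : ℍ[K, a, b]) :
    conjMap γ x = (γ : ℍ[K, a, b]) * x * ((γ⁻¹ : (ℍ[K, a, b])ˣ) : ℍ[K, a, b]) := rfl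

lemma trd_conj {K : Type*} [Field K] {a b : K} (γ : (ℍ[K, a, b])ˣ) (x : ℍ[K, a, b]) :
    Trd (conjMap γ x) = Trd x := by
  unfold Trd
  rw [conjMap_apply, mul_assoc, re_mul_comm, Units.inv_mul_cancel_right]

lemma right_part {K : Type*} [Field K] {a b : K} (u : ℍ[K, a, b]) (γ₁ γ₂ : (ℍ[K, a, b])ˣ) :
    LinearMap.ker
          (LinearMap.mulRight K
            ((γ₁ : ℍ[K, a, b]) * u * ((γ₂⁻¹ : (ℍ[K, a, b])ˣ) : ℍ[K, a, b]))) ⊓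
        pureQuaternions K a b =
      Submodule.map (conjMap γ₁)
        (LinearMap.ker (LinearMap.mulRight K u) ⊓ pureQuaternions K a b) := by
  ext x
  simp only [Submodule.mem_inf, LinearMap.mem_ker, LinearMap.mulRight_apply,
    Submodule.mem_map, mem_pure]
  constructor
  · rintro ⟨h1, h2⟩
    have h3 : x * ((γ₁ : ℍ[K, a, b]) * u) = 0 := by
      have := congrArg (· * ((γ₂ : (ℍ[K, a, b])ˣ) : ℍ[K, a, b])) h1
      simpa [mul_assoc] using this
    refine ⟨((γ₁⁻¹ : (ℍ[K, a, b])ˣ) : ℍ[K, a, b]) * x * γ₁, ⟨?_, ?_⟩, ?_⟩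
    · simp only [mul_assoc]
      rw [h3, mul_zero]
    · unfold Trd at h2 ⊢
      rw [mul_assoc, re_mul_comm, Units.mul_inv_cancel_right]
      exact h2
    · rw [conjMap_apply]
      simp [mul_assoc]
  · rintro ⟨y, ⟨h1, h2⟩, rfl⟩
    rw [conjMap_apply]
    refine ⟨?_, by rw [← conjMap_apply, trd_conj]; exact h2⟩
    simp only [mul_assoc]
    rw [Units.inv_mul_cancel_left, ← mul_assoc y u, h1, zero_mul, mul_zero]

lemma left_part {K : Type*} [Field K] {a b : K} (u : ℍ[K, a, b]) (γ₁ γ₂ : (ℍ[K, a, b])ˣ) :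
    LinearMap.ker
          (LinearMap.mulLeft K
            ((γ₁ : ℍ[K, a, b]) * u * ((γ₂⁻¹ : (ℍ[K, a, b])ˣ) : ℍ[K, a, b]))) ⊓
        pureQuaternions K a b =
      Submodule.map (conjMap γ₂)
        (LinearMap.ker (LinearMap.mulLeft K u) ⊓ pureQuaternions K a b) := by
  ext x
  simp only [Submodule.mem_inf, LinearMap.mem_ker, LinearMap.mulLeft_apply,
    Submodule.mem_map, mem_pure]
  constructor
  · rintro ⟨h1, h2⟩
    have h3 : u * (((γ₂⁻¹ : (ℍ[K, a, b])ˣ) : ℍ[K, a, b]) * x) = 0 := by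
      have := congrArg (((γ₁⁻¹ : (ℍ[K, a, b])ˣ) : ℍ[K, a, b]) * ·) h1
      simpa [mul_assoc] using this
    refine ⟨((γ₂⁻¹ : (ℍ[K, a, b])ˣ) : ℍ[K, a, b]) * x * γ₂, ⟨?_, ?_⟩, ?_⟩
    · rw [← mul_assoc, h3, zero_mul]
    · unfold Trd at h2 ⊢
      rw [mul_assoc, re_mul_comm, Units.mul_inv_cancel_right]
      exact h2
    · rw [conjMap_apply]
      simp [mul_assoc]
  · rintro ⟨y, ⟨h1, h2⟩, rfl⟩
    rw [conjMap_apply]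
    refine ⟨?_, by rw [← conjMap_apply, trd_conj]; exact h2⟩
    simp only [mul_assoc]
    rw [Units.inv_mul_cancel_left, ← mul_assoc u y, h1, zero_mul, mul_zero]

/-- For `u ≠ 0` isotropic and a pair of units `(γ₁, γ₂)` acting by
`γ ⋅ u = γ₁ · u · γ₂⁻¹`, one has `ker(r_{γ⋅u}) ∩ B₀ = γ₁·(ker(r_u) ∩ B₀)·γ₁⁻¹` and
`ker(ℓ_{γ⋅u}) ∩ B₀ = γ₂·(ker(ℓ_u) ∩ B₀)·γ₂⁻¹`. -/
theorem ker_inf_pure_of_pair_action {K : Type*} [Field K] (hchar : (2 : K) ≠ 0)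
    (a b : K) (ha : a ≠ 0) (hb : b ≠ 0) (u : ℍ[K, a, b]) (hu : u ≠ 0) (hiso : Nrd u = 0)
    (γ₁ γ₂ : (ℍ[K, a, b])ˣ) :
    LinearMap.ker
          (LinearMap.mulRight K
            ((γ₁ : ℍ[K, a, b]) * u * ((γ₂⁻¹ : (ℍ[K, a, b])ˣ) : ℍ[K, a, b]))) ⊓
        pureQuaternions K a b =
      Submodule.map (conjMap γ₁)
        (LinearMap.ker (LinearMap.mulRight K u) ⊓ pureQuaternions K a b) ∧
    LinearMap.ker
          (LinearMap.mulLeft K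
            ((γ₁ : ℍ[K, a, b]) * u * ((γ₂⁻¹ : (ℍ[K, a, b])ˣ) : ℍ[K, a, b]))) ⊓
        pureQuaternions K a b =
      Submodule.map (conjMap γ₂)
        (LinearMap.ker (LinearMap.mulLeft K u) ⊓ pureQuaternions K a b) := by
  exact ⟨right_part u γ₁ γ₂, left_part u γ₁ γ₂⟩
end

section
/- Let B be a quaternion algebra over a field K of characteristic ≠ 2, L/K a field extension, and ω ⊂ (B₀)_L a 1-dimensional isotropic subspace (with respect to the reduced norm). For a unit γ ∈ Bˣ, one has γ·ω·γ⁻¹ = ω if and only if γ·ω = ω (where γ·ω means multiplication in B_L). -/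
open Quaternion

/-- Base change of quaternions along `algebraMap K L`, componentwise. -/
def baseChange {K L : Type*} [Field K] [Field L] [Algebra K L] {a b : K}
    (x : ℍ[K, a, b]) : ℍ[L, algebraMap K L a, algebraMap K L b] :=
  ⟨algebraMap K L x.re, algebraMap K L x.imI, algebraMap K L x.imJ, algebraMap K L x.imK⟩

/-- Core lemma: if `u` is a nonzero pure quaternion and `u * w = 0 = w * u`, then
`w` is a scalar multiple of `u`. -/
lemma core_scalar {L : Type*} [Field L] {c₁ c₂ : L} (hc₁ : c₁ ≠ 0) (hc₂ : c₂ ≠ 0)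
    (h2 : (2 : L) ≠ 0) {u w : ℍ[L, c₁, c₂]} (hu : u ≠ 0) (hre : u.re = 0)
    (huw : u * w = 0) (hwu : w * u = 0) : ∃ l : L, w = l • u := by
  obtain ⟨u0, u1, u2, u3⟩ := u
  obtain ⟨w0, w1, w2, w3⟩ := w
  have hu0 : u0 = 0 := hre
  subst hu0
  rw [QuaternionAlgebra.ext_iff] at huw hwu
  simp only [QuaternionAlgebra.re_mul, QuaternionAlgebra.imI_mul, QuaternionAlgebra.imJ_mul,
    QuaternionAlgebra.imK_mul, QuaternionAlgebra.re_zero, QuaternionAlgebra.imI_zero,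
    QuaternionAlgebra.imJ_zero, QuaternionAlgebra.imK_zero] at huw hwu
  obtain ⟨aR, aI, aJ, aK⟩ := huw
  obtain ⟨bR, bI, bJ, bK⟩ := hwu
  have hw01 : w0 * u1 = 0 := by
    have h : (2 : L) * (w0 * u1) = 0 := by linear_combination aI + bI
    exact (mul_eq_zero.mp h).resolve_left h2
  have hw02 : w0 * u2 = 0 := by
    have h : (2 : L) * (w0 * u2) = 0 := by linear_combination aJ + bJ
    exact (mul_eq_zero.mp h).resolve_left h2
  have hw03 : w0 * u3 = 0 := by
    have h : (2 : L) * (w0 * u3) = 0 := by linear_combination aK + bK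
    exact (mul_eq_zero.mp h).resolve_left h2
  have m12 : u1 * w2 - u2 * w1 = 0 := by
    have h : (2 : L) * (u1 * w2 - u2 * w1) = 0 := by linear_combination aK - bK
    exact (mul_eq_zero.mp h).resolve_left h2
  have m13 : u1 * w3 - u3 * w1 = 0 := by
    have h : (2 * c₁) * (u1 * w3 - u3 * w1) = 0 := by linear_combination aJ - bJ
    exact (mul_eq_zero.mp h).resolve_left (mul_ne_zero h2 hc₁)
  have m23 : u2 * w3 - u3 * w2 = 0 := by
    have h : (2 * c₂) * (u2 * w3 - u3 * w2) = 0 := by linear_combination bI - aI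
    exact (mul_eq_zero.mp h).resolve_left (mul_ne_zero h2 hc₂)
  have hune : ¬(u1 = 0 ∧ u2 = 0 ∧ u3 = 0) := by
    rintro ⟨rfl, rfl, rfl⟩
    exact hu rfl
  by_cases h1 : u1 = 0
  · by_cases h2' : u2 = 0
    · have h3 : u3 ≠ 0 := fun h3 => hune ⟨h1, h2', h3⟩
      subst h1; subst h2'
      refine ⟨w3 / u3, ?_⟩
      rw [QuaternionAlgebra.ext_iff]
      simp only [QuaternionAlgebra.re_smul, QuaternionAlgebra.imI_smul,
        QuaternionAlgebra.imJ_smul, QuaternionAlgebra.imK_smul, smul_eq_mul]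
      refine ⟨?_, ?_, ?_, ?_⟩ <;> field_simp
      · simp [(mul_eq_zero.mp hw03).resolve_right h3]
      · have := (mul_eq_zero.mp (show u3 * w1 = 0 by linear_combination -m13)).resolve_left h3
        simp [this]
      · have := (mul_eq_zero.mp (show u3 * w2 = 0 by linear_combination -m23)).resolve_left h3
        simp [this]
    · subst h1
      refine ⟨w2 / u2, ?_⟩
      rw [QuaternionAlgebra.ext_iff]
      simp only [QuaternionAlgebra.re_smul, QuaternionAlgebra.imI_smul,
        QuaternionAlgebra.imJ_smul, QuaternionAlgebra.imK_smul, smul_eq_mul]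
      refine ⟨?_, ?_, ?_, ?_⟩
      · field_simp
        simp [(mul_eq_zero.mp hw02).resolve_right h2']
      · field_simp
        have := (mul_eq_zero.mp (show u2 * w1 = 0 by linear_combination -m12)).resolve_left h2'
        simp [this]
      · field_simp
      · field_simp
        linear_combination m23
  · refine ⟨w1 / u1, ?_⟩
    rw [QuaternionAlgebra.ext_iff]
    simp only [QuaternionAlgebra.re_smul, QuaternionAlgebra.imI_smul,
      QuaternionAlgebra.imJ_smul, QuaternionAlgebra.imK_smul, smul_eq_mul]
    refine ⟨?_, ?_, ?_, ?_⟩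
    · field_simp
      simp [(mul_eq_zero.mp hw01).resolve_right h1]
    · field_simp
    · field_simp
      linear_combination m12
    · field_simp
      linear_combination m13

lemma baseChange_mul {K L : Type*} [Field K] [Field L] [Algebra K L] {a b : K}
    (x y : ℍ[K, a, b]) : baseChange (x * y) = (baseChange x) * (baseChange y : ℍ[L, _, _]) := by
  rw [QuaternionAlgebra.ext_iff]
  simp only [baseChange, QuaternionAlgebra.re_mul, QuaternionAlgebra.imI_mul,
    QuaternionAlgebra.imJ_mul, QuaternionAlgebra.imK_mul, map_add, map_sub, map_mul, map_zero]
  refine ⟨?_, ?_, ?_, ?_⟩ <;> trivial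

lemma baseChange_one {K L : Type*} [Field K] [Field L] [Algebra K L] {a b : K} :
    baseChange (1 : ℍ[K, a, b]) = (1 : ℍ[L, algebraMap K L a, algebraMap K L b]) := by
  rw [QuaternionAlgebra.ext_iff]
  simp [baseChange]

/-- Spans of singletons are equal iff the vectors are nonzero multiples of each other. -/
lemma span_singleton_eq_iff {L M : Type*} [Field L] [AddCommGroup M] [Module L M]
    {x u : M} (hu : u ≠ 0) :
    (Submodule.span L {x} = Submodule.span L {u}) ↔ ∃ c : L, c ≠ 0 ∧ x = c • u := by
  constructor
  · intro h
    have hx : x ∈ Submodule.span L {u} := h ▸ Submodule.mem_span_singleton_self x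
    obtain ⟨c, hc⟩ := Submodule.mem_span_singleton.mp hx
    refine ⟨c, ?_, hc.symm⟩
    rintro rfl
    rw [zero_smul] at hc
    rw [← hc, Submodule.span_zero_singleton] at h
    have := h.symm ▸ Submodule.mem_span_singleton_self u
    rw [Submodule.mem_bot] at this
    exact hu this
  · rintro ⟨c, hc, rfl⟩
    exact Submodule.span_singleton_smul_eq (isUnit_iff_ne_zero.mpr hc) u

/-- Let `B` be a quaternion algebra over `K` (char `≠ 2`), `L/K` a field
extension and `ω ⊂ (B₀)_L` a 1-dimensional isotropic subspace. For a unit `γ ∈ Bˣ` one has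
`γ·ω·γ⁻¹ = ω` if and only if `γ·ω = ω`. -/
theorem conj_stabilizes_iff_mul_stabilizes {K L : Type*} [Field K] [Field L] [Algebra K L]
    (hchar : (2 : K) ≠ 0) (a b : K) (ha : a ≠ 0) (hb : b ≠ 0)
    (ω : Submodule L ℍ[L, algebraMap K L a, algebraMap K L b])
    (hdim : Module.finrank L ↥ω = 1)
    (hpure : ω ≤ pureQuaternions L (algebraMap K L a) (algebraMap K L b))
    (hiso : ∀ x ∈ ω, Nrd x = 0)
    (γ : (ℍ[K, a, b])ˣ) :
    Submodule.map
        ((LinearMap.mulRight L (baseChange ((γ⁻¹ : (ℍ[K, a, b])ˣ) : ℍ[K, a, b]))).comp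
          (LinearMap.mulLeft L (baseChange (γ : ℍ[K, a, b])))) ω = ω ↔
      Submodule.map (LinearMap.mulLeft L (baseChange (γ : ℍ[K, a, b]))) ω = ω := by
  have hinj : Function.Injective (algebraMap K L) := (algebraMap K L).injective
  have hc₁ : algebraMap K L a ≠ 0 := fun h => ha (hinj (by simpa using h))
  have hc₂ : algebraMap K L b ≠ 0 := fun h => hb (hinj (by simpa using h))
  have h2L : (2 : L) ≠ 0 := by
    intro h
    apply hchar
    apply hinj
    rw [map_ofNat, map_zero]
    exact h
  set g : ℍ[L, algebraMap K L a, algebraMap K L b] := baseChange (γ : ℍ[K, a, b]) with hgdef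
  set g' : ℍ[L, algebraMap K L a, algebraMap K L b] :=
    baseChange ((γ⁻¹ : (ℍ[K, a, b])ˣ) : ℍ[K, a, b]) with hg'def
  have hgg' : g * g' = 1 := by
    rw [hgdef, hg'def, ← baseChange_mul, Units.mul_inv, baseChange_one]
  have hg'g : g' * g = 1 := by
    rw [hgdef, hg'def, ← baseChange_mul, Units.inv_mul, baseChange_one]
  -- obtain a generator of ω
  obtain ⟨v, hv0, hv⟩ := finrank_eq_one_iff'.mp hdim
  set u : ℍ[L, algebraMap K L a, algebraMap K L b] := v.1 with hudef
  have hu : u ≠ 0 := fun h => hv0 (Subtype.ext h)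
  have hω : ω = Submodule.span L {u} := by
    apply le_antisymm
    · intro x hx
      obtain ⟨c, hc⟩ := hv ⟨x, hx⟩
      rw [Submodule.mem_span_singleton]
      exact ⟨c, congrArg Subtype.val hc⟩
    · rw [Submodule.span_le, Set.singleton_subset_iff]
      exact v.2
  have hre : u.re = 0 := by
    have := hpure v.2
    simp only [pureQuaternions, Submodule.mem_mk, AddSubmonoid.mem_mk,
      AddSubsemigroup.mem_mk, Set.mem_setOf_eq, Trd] at this
    exact (mul_eq_zero.mp this).resolve_left h2L
  have hNrd : Nrd u = 0 := hiso u v.2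
  have huu : u * u = 0 := by
    have hn : u.re * u.re - algebraMap K L a * u.imI * u.imI -
        algebraMap K L b * u.imJ * u.imJ +
        algebraMap K L a * algebraMap K L b * u.imK * u.imK = 0 := by
      have : (u * star u).re = 0 := hNrd
      simp only [QuaternionAlgebra.re_mul, QuaternionAlgebra.re_star,
        QuaternionAlgebra.imI_star, QuaternionAlgebra.imJ_star,
        QuaternionAlgebra.imK_star] at this
      linear_combination this
    rw [QuaternionAlgebra.ext_iff]
    simp only [QuaternionAlgebra.re_mul, QuaternionAlgebra.imI_mul, QuaternionAlgebra.imJ_mul,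
      QuaternionAlgebra.imK_mul, QuaternionAlgebra.re_zero, QuaternionAlgebra.imI_zero,
      QuaternionAlgebra.imJ_zero, QuaternionAlgebra.imK_zero, hre]
    refine ⟨by linear_combination -hn + u.re * hre, by ring, by ring, by ring⟩
  -- rewrite both submodule conditions as span conditions
  rw [hω]
  rw [Submodule.map_span, Submodule.map_span, Set.image_singleton, Set.image_singleton]
  simp only [LinearMap.comp_apply, LinearMap.mulLeft_apply, LinearMap.mulRight_apply]
  constructor
  · intro h
    obtain ⟨μ, hμ0, hμ⟩ := (span_singleton_eq_iff hu).mp h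
    have hgu : g * u = μ • (u * g) := by
      calc g * u = g * u * g' * g := by rw [mul_assoc, hg'g, mul_one]
        _ = (μ • u) * g := by rw [hμ]
        _ = μ • (u * g) := smul_mul_assoc μ u g
    have h1 : u * (g * u) = 0 := by
      rw [hgu, mul_smul_comm, ← mul_assoc, huu, zero_mul, smul_zero]
    have h2 : (g * u) * u = 0 := by rw [mul_assoc, huu, mul_zero]
    obtain ⟨l, hl⟩ := core_scalar hc₁ hc₂ h2L hu hre h1 h2
    have hl0 : l ≠ 0 := by
      rintro rfl
      rw [zero_smul] at hl
      apply hu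
      calc u = g' * (g * u) := by rw [← mul_assoc, hg'g, one_mul]
        _ = 0 := by rw [hl, mul_zero]
    exact (span_singleton_eq_iff hu).mpr ⟨l, hl0, hl⟩
  · intro h
    obtain ⟨l, hl0, hl⟩ := (span_singleton_eq_iff hu).mp h
    have h1 : u * (u * g) = 0 := by rw [← mul_assoc, huu, zero_mul]
    have h2 : (u * g) * u = 0 := by
      rw [mul_assoc, hl, mul_smul_comm, huu, smul_zero]
    obtain ⟨ρ, hρ⟩ := core_scalar hc₁ hc₂ h2L hu hre h1 h2
    have hρ0 : ρ ≠ 0 := by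
      rintro rfl
      rw [zero_smul] at hρ
      apply hu
      calc u = (u * g) * g' := by rw [mul_assoc, hgg', mul_one]
        _ = 0 := by rw [hρ, zero_mul]
    have hug' : u * g' = ρ⁻¹ • u := by
      have h3 : ρ • (u * g') = u := by
        rw [← smul_mul_assoc, ← hρ, mul_assoc, hgg', mul_one]
      calc u * g' = ρ⁻¹ • (ρ • (u * g')) := by
            rw [smul_smul, inv_mul_cancel₀ hρ0, one_smul]
        _ = ρ⁻¹ • u := by rw [h3]
    have : g * u * g' = (l * ρ⁻¹) • u := by
      rw [hl, smul_mul_assoc, hug', smul_smul]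
    exact (span_singleton_eq_iff hu).mpr
      ⟨l * ρ⁻¹, mul_ne_zero hl0 (inv_ne_zero hρ0), this⟩
end
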